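/- arXiv:1501.03505 — 5 statements merged into one kernel-verified Lean document; each statement's English description precedes it below -/
import Mathlib

section
/- Let m be an even positive integer and let d = 2^s for some integer s ≥ 1. Consider any deterministic sequential protocol for n parties that solves the sequential n-point modulo-(m,d) problem with certainty. Then the number of stages k ∈ {1,…,n−1} at which the message alphabet M_k satisfies m·|M_k| < d (i.e., the party sends fewer than log₂(d/m) bits) is at most m·d − 1. -/
/-!
Track the defect `∑ Xᵢ - d ∑ Yᵢ` modulo `m * d`. Correctness, propagated backwards from the
last stage (whose input can always make the input sum vanish modulo `d`), shows that among runs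
reaching the same message the defect is determined by its residue modulo `d`. At a stage with
`m * |M_{k+1}| < d`, two inputs `x < x'` produce the same message and output. If this did not
enlarge the set of defects reachable with the current message, that set would be invariant under
translation by `x' - x`; as `0 < x' - x < d = 2 ^ s` and `m` is even, some multiple of `x' - x`
is divisible by `d` but not by `m * d`, contradicting the determination modulo `d`. Hence every
such stage enlarges a set of reachable defects, which starts as a singleton inside `ZMod (m * d)`.
-/

/-- A deterministic sequential protocol for `n` parties in the sequential `n`-point
modulo-`(m,d)` problem.  Stage `k+1` (1-indexed) receives a message from alphabet `Msg k`
(`Msg 0` being a one-element set), together with its input in `Fin d`, produces an output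
in `Fin m` and sends a message from alphabet `Msg (k+1)` to the following party. -/
structure SeqProtocol (n m d : ℕ) where
  Msg : ℕ → Type
  msgFintype : ∀ k, Fintype (Msg k)
  msgInit : Msg 0
  msgInitSubsingleton : Subsingleton (Msg 0)
  out : (k : ℕ) → Fin d → Msg k → Fin m
  send : (k : ℕ) → Fin d → Msg k → Msg (k + 1)

namespace SeqProtocol

variable {n m d : ℕ}

/-- The message produced after the first `k` stages on input `X` (where `X k` is the
input of the `(k+1)`-st party, 0-indexed). -/
def run (P : SeqProtocol n m d) (X : ℕ → Fin d) : (k : ℕ) → P.Msg k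
  | 0 => P.msgInit
  | k + 1 => P.send k (X k) (P.run X k)

/-- The protocol solves the sequential `n`-point modulo-`(m,d)` problem with certainty:
for every input `X` with `∑ X k ≡ 0 (mod d)`, the outputs `Y` satisfy
`d * ∑ Y k ≡ ∑ X k (mod m·d)`. -/
def Solves (P : SeqProtocol n m d) : Prop :=
  ∀ X : ℕ → Fin d,
    (d : ℤ) ∣ (∑ k ∈ Finset.range n, ((X k : ℕ) : ℤ)) →
    ((d : ℤ) * ∑ k ∈ Finset.range n, ((P.out k (X k) (P.run X k) : ℕ) : ℤ)) ≡
      (∑ k ∈ Finset.range n, ((X k : ℕ) : ℤ)) [ZMOD ((m : ℤ) * d)]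

end SeqProtocol

attribute [local instance] SeqProtocol.msgFintype

open Finset

theorem Nat.exists_two_pow_dvd_mul_not_dvd {m s a : ℕ} (hm : Even m) (ha : a ≠ 0)
    (has : a < 2 ^ s) : ∃ q, 2 ^ s ∣ q * a ∧ ¬ m * 2 ^ s ∣ q * a := by
  obtain ⟨t, u, hu, rfl⟩ := Nat.exists_eq_pow_mul_and_not_dvd ha 2 (by norm_num)
  have hu0 : 0 < u := Nat.pos_of_ne_zero (by rintro rfl; exact hu (dvd_zero 2))
  have hts : t ≤ s :=
    ((Nat.pow_lt_pow_iff_right (by norm_num)).mp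
      ((Nat.le_mul_of_pos_right _ hu0).trans_lt has)).le
  have hq : 2 ^ (s - t) * (2 ^ t * u) = 2 ^ s * u := by
    rw [← mul_assoc, ← pow_add, Nat.sub_add_cancel hts]
  refine ⟨2 ^ (s - t), hq ▸ dvd_mul_right _ _, ?_⟩
  rw [hq, mul_comm m, Nat.mul_dvd_mul_iff_left (by positivity)]
  exact fun hmu => hu (hm.two_dvd.trans hmu)

theorem Finset.add_nsmul_sub_mem_of_image_add_eq {G : Type*} [AddCommGroup G] [DecidableEq G]
    {D : Finset G} {a b : G} (h : D.image (· + a) = D.image (· + b)) {v : G} (hv : v ∈ D)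
    (q : ℕ) : v + q • (b - a) ∈ D := by
  induction q with
  | zero => simpa using hv
  | succ q ih =>
    obtain ⟨u, hu, hua⟩ := mem_image.mp (h ▸ mem_image_of_mem (· + b) ih)
    convert hu using 1
    rw [succ_nsmul, eq_sub_of_add_eq hua]
    abel

theorem Finset.card_lt_card_union_of_ne {α : Type*} [DecidableEq α] {A B : Finset α}
    (hAB : A ≠ B) (hcard : #A = #B) : #A < #(A ∪ B) :=
  card_lt_card <| ssubset_iff_subset_ne.mpr ⟨subset_union_left, fun h =>
    hAB (eq_of_subset_of_card_le (union_eq_left.mp h.symm) hcard.le).symm⟩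

namespace SeqProtocol

variable {n m d : ℕ} (P : SeqProtocol n m d)

def defect (X : ℕ → Fin d) (k : ℕ) : ZMod (m * d) :=
  ∑ i ∈ range k, ((X i : ℕ) : ZMod (m * d))
    - d * ∑ i ∈ range k, ((P.out i (X i) (P.run X i) : ℕ) : ZMod (m * d))

def defectStep (k : ℕ) (x : Fin d) (μ : P.Msg k) : ZMod (m * d) :=
  (x : ℕ) - d * (P.out k x μ : ℕ)

def reachable (k : ℕ) (μ : P.Msg k) : Set (ZMod (m * d)) :=
  {v | ∃ X, P.run X k = μ ∧ P.defect X k = v}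

def narrowStages (k : ℕ) : Finset ℕ :=
  (Icc 1 k).filter fun j => m * Fintype.card (P.Msg j) < d

theorem run_congr {X X' : ℕ → Fin d} {k : ℕ} (h : ∀ i < k, X i = X' i) :
    P.run X k = P.run X' k := by
  induction k with
  | zero => rfl
  | succ k ih => simp only [run, h k k.lt_succ_self, ih fun i hi => h i (hi.trans k.lt_succ_self)]

theorem defect_congr {X X' : ℕ → Fin d} {k : ℕ} (h : ∀ i < k, X i = X' i) :
    P.defect X k = P.defect X' k := by
  have hrun : ∀ i ∈ range k, P.run X i = P.run X' i := fun i hi =>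
    P.run_congr fun j hj => h j (hj.trans (mem_range.mp hi))
  unfold defect
  congr 1
  · exact sum_congr rfl fun i hi => by rw [h i (mem_range.mp hi)]
  · exact congrArg _ (sum_congr rfl fun i hi => by rw [h i (mem_range.mp hi), hrun i hi])

theorem defect_succ (X : ℕ → Fin d) (k : ℕ) :
    P.defect X (k + 1) = P.defect X k + P.defectStep k (X k) (P.run X k) := by
  simp only [defect, defectStep, sum_range_succ]
  ring

theorem castHom_defect (X : ℕ → Fin d) (k : ℕ) :
    ZMod.castHom (dvd_mul_left d m) (ZMod d) (P.defect X k) =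
      ∑ i ∈ range k, ((X i : ℕ) : ZMod d) := by
  simp only [defect, map_sub, map_mul, map_sum, map_natCast, ZMod.natCast_self, zero_mul, sub_zero]

theorem castHom_defectStep (k : ℕ) (x : Fin d) (μ : P.Msg k) :
    ZMod.castHom (dvd_mul_left d m) (ZMod d) (P.defectStep k x μ) = (x : ℕ) := by
  simp only [defectStep, map_sub, map_mul, map_natCast, ZMod.natCast_self, zero_mul, sub_zero]

theorem add_defectStep_mem_reachable {k : ℕ} {μ : P.Msg k} {v : ZMod (m * d)}
    (hv : v ∈ P.reachable k μ) (x : Fin d) :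
    v + P.defectStep k x μ ∈ P.reachable (k + 1) (P.send k x μ) := by
  classical
  obtain ⟨X, hrun, rfl⟩ := hv
  have hagree : ∀ i < k, X i = Function.update X k x i := fun i hi =>
    (Function.update_of_ne hi.ne _ _).symm
  have hrun' : P.run (Function.update X k x) k = μ := (P.run_congr hagree).symm.trans hrun
  refine ⟨Function.update X k x, ?_, ?_⟩
  · simp only [run, hrun', Function.update_self]
  · rw [defect_succ, ← P.defect_congr hagree, hrun', Function.update_self]

theorem image_add_defectStep_subset_reachable {k : ℕ} {μ : P.Msg k} {D : Finset (ZMod (m * d))}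
    (hD : ↑D ⊆ P.reachable k μ) (x : Fin d) :
    ↑(D.image (· + P.defectStep k x μ)) ⊆ P.reachable (k + 1) (P.send k x μ) := by
  intro w hw
  obtain ⟨v, hv, rfl⟩ := mem_image.mp hw
  exact P.add_defectStep_mem_reachable (hD hv) x

theorem narrowStages_succ (k : ℕ) :
    P.narrowStages (k + 1) = if m * Fintype.card (P.Msg (k + 1)) < d
      then insert (k + 1) (P.narrowStages k) else P.narrowStages k := by
  rw [narrowStages, ← insert_Icc_right_eq_Icc_add_one (by omega), filter_insert]
  rfl

variable {P}

theorem Solves.eq_zero_of_mem_reachable (hP : P.Solves) {μ : P.Msg n}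
    {v : ZMod (m * d)} (hv : v ∈ P.reachable n μ)
    (h : ZMod.castHom (dvd_mul_left d m) (ZMod d) v = 0) : v = 0 := by
  obtain ⟨X, -, rfl⟩ := hv
  rw [castHom_defect] at h
  have hdvd : (d : ℤ) ∣ ∑ k ∈ range n, ((X k : ℕ) : ℤ) := by
    rw [← ZMod.intCast_zmod_eq_zero_iff_dvd]
    exact_mod_cast h
  have := (ZMod.intCast_eq_intCast_iff _ _ (m * d)).mpr (by push_cast; exact hP X hdvd)
  push_cast at this
  rw [defect, this, sub_self]

theorem injOn_castHom_reachable_of_succ [NeZero d] {k : ℕ}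
    (hsucc : ∀ μ', ∀ v ∈ P.reachable (k + 1) μ', ∀ w ∈ P.reachable (k + 1) μ',
      ZMod.castHom (dvd_mul_left d m) (ZMod d) v = 0 →
        ZMod.castHom (dvd_mul_left d m) (ZMod d) w = 0 → v = w)
    (μ : P.Msg k) :
    Set.InjOn (ZMod.castHom (dvd_mul_left d m) (ZMod d)) (P.reachable k μ) := by
  intro v hv w hw hvw
  -- the next input brings both running sums to `0` modulo `d`
  obtain ⟨x, hx⟩ : ∃ x : Fin d,
      ((x : ℕ) : ZMod d) = -ZMod.castHom (dvd_mul_left d m) (ZMod d) v :=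
    ⟨⟨_, ZMod.val_lt _⟩, ZMod.natCast_zmod_val _⟩
  refine add_right_cancel (hsucc _ _ (P.add_defectStep_mem_reachable hv x) _
    (P.add_defectStep_mem_reachable hw x) ?_ ?_)
  · rw [map_add, castHom_defectStep, hx, add_neg_cancel]
  · rw [map_add, castHom_defectStep, hx, ← hvw, add_neg_cancel]

theorem Solves.eq_of_mem_reachable_of_castHom_eq_zero [NeZero d] (hP : P.Solves) {k : ℕ}
    (hk : k ≤ n) {μ : P.Msg k} {v w : ZMod (m * d)} (hv : v ∈ P.reachable k μ)
    (hw : w ∈ P.reachable k μ) (hv0 : ZMod.castHom (dvd_mul_left d m) (ZMod d) v = 0)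
    (hw0 : ZMod.castHom (dvd_mul_left d m) (ZMod d) w = 0) : v = w := by
  induction hk using Nat.decreasingInduction generalizing v w with
  | self => rw [hP.eq_zero_of_mem_reachable hv hv0, hP.eq_zero_of_mem_reachable hw hw0]
  | of_succ k _ ih =>
    exact injOn_castHom_reachable_of_succ (fun _ _ hv _ hw => ih hv hw) μ hv hw
      (hv0.trans hw0.symm)

theorem Solves.injOn_castHom_reachable [NeZero d] (hP : P.Solves) {k : ℕ} (hk : k < n)
    (μ : P.Msg k) : Set.InjOn (ZMod.castHom (dvd_mul_left d m) (ZMod d)) (P.reachable k μ) :=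
  injOn_castHom_reachable_of_succ
    (fun _ _ hv _ hw => hP.eq_of_mem_reachable_of_castHom_eq_zero hk hv hw) μ

theorem Solves.exists_card_lt_of_narrow {s : ℕ} {P : SeqProtocol n m (2 ^ s)} (hP : P.Solves)
    (hm : Even m) {k : ℕ} (hk : k < n) (hnarrow : m * Fintype.card (P.Msg (k + 1)) < 2 ^ s)
    {μ : P.Msg k} {D : Finset (ZMod (m * 2 ^ s))} (hD : ↑D ⊆ P.reachable k μ)
    (hD0 : D.Nonempty) :
    ∃ (μ' : P.Msg (k + 1)) (D' : Finset (ZMod (m * 2 ^ s))),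
      ↑D' ⊆ P.reachable (k + 1) μ' ∧ #D < #D' := by
  classical
  obtain ⟨x, x', hxx', hsend, hout⟩ : ∃ x x' : Fin (2 ^ s), x < x' ∧
      P.send k x μ = P.send k x' μ ∧ P.out k x μ = P.out k x' μ := by
    have hcard : Fintype.card (P.Msg (k + 1) × Fin m) < Fintype.card (Fin (2 ^ s)) := by
      simpa [mul_comm] using hnarrow
    obtain ⟨x, x', hne, heq⟩ := Fintype.exists_ne_map_eq_of_card_lt
      (fun x => (P.send k x μ, P.out k x μ)) hcard
    rw [Prod.mk.injEq] at heq
    rcases hne.lt_or_gt with h | h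
    · exact ⟨x, x', h, heq⟩
    · exact ⟨x', x, h, heq.1.symm, heq.2.symm⟩
  set A := D.image (· + P.defectStep k x μ)
  set B := D.image (· + P.defectStep k x' μ)
  have hAB : A ≠ B := by
    intro hAB
    obtain ⟨v, hv⟩ := hD0
    obtain ⟨q, hdq, hmdq⟩ := Nat.exists_two_pow_dvd_mul_not_dvd hm
      (Nat.sub_ne_zero_of_lt (show (x : ℕ) < x' from hxx')) ((Nat.sub_le _ _).trans_lt x'.isLt)
    have hδ : P.defectStep k x' μ - P.defectStep k x μ =
        (((x' : ℕ) - x : ℕ) : ZMod (m * 2 ^ s)) := by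
      rw [defectStep, defectStep, hout, Nat.cast_sub (show (x : ℕ) ≤ x' from hxx'.le)]
      ring
    have hqδ := add_nsmul_sub_mem_of_image_add_eq hAB hv q
    rw [hδ, nsmul_eq_mul, ← Nat.cast_mul] at hqδ
    apply hmdq
    rw [← ZMod.natCast_eq_zero_iff, ← add_eq_left (a := v)]
    refine hP.injOn_castHom_reachable hk μ (hD hqδ) (hD hv) ?_
    rw [map_add, map_natCast, (ZMod.natCast_eq_zero_iff _ _).mpr hdq, add_zero]
  refine ⟨P.send k x μ, A ∪ B, ?_, ?_⟩
  · rw [coe_union]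
    refine Set.union_subset (P.image_add_defectStep_subset_reachable hD x) ?_
    rw [hsend]
    exact P.image_add_defectStep_subset_reachable hD x'
  · have hA : #A = #D := card_image_of_injective _ (add_left_injective _)
    have hB : #B = #D := card_image_of_injective _ (add_left_injective _)
    exact hA ▸ card_lt_card_union_of_ne hAB (hA.trans hB.symm)

theorem Solves.exists_reachable_card_gt {s : ℕ} {P : SeqProtocol n m (2 ^ s)} (hP : P.Solves)
    (hm : Even m) {k : ℕ} (hk : k ≤ n - 1) :
    ∃ (μ : P.Msg k) (D : Finset (ZMod (m * 2 ^ s))),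
      ↑D ⊆ P.reachable k μ ∧ #(P.narrowStages k) < #D := by
  classical
  induction k with
  | zero =>
    refine ⟨P.msgInit, {0}, ?_, by simp [narrowStages]⟩
    simpa using ⟨fun _ => 0, rfl, by simp [defect]⟩
  | succ k ih =>
    obtain ⟨μ, D, hD, hcard⟩ := ih (by omega)
    by_cases hnarrow : m * Fintype.card (P.Msg (k + 1)) < 2 ^ s
    · obtain ⟨μ', D', hD', hDD'⟩ :=
        hP.exists_card_lt_of_narrow hm (by omega) hnarrow hD (card_pos.mp (by omega))
      refine ⟨μ', D', hD', ?_⟩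
      rw [narrowStages_succ, if_pos hnarrow]
      exact (card_insert_le _ _).trans_lt (by omega)
    · refine ⟨_, _, P.image_add_defectStep_subset_reachable hD 0, ?_⟩
      rwa [narrowStages_succ, if_neg hnarrow, card_image_of_injective _ (add_left_injective _)]

end SeqProtocol

theorem modulo_game_communication_lower_bound_general
    {n m d s : ℕ} (hm : 0 < m) (hmeven : Even m) (hd : d = 2 ^ s)
    (P : SeqProtocol n m d) (hP : P.Solves) :
    ((Finset.Icc 1 (n - 1)).filter
        (fun k => m * (@Fintype.card (P.Msg k) (P.msgFintype k)) < d)).card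
      ≤ m * d - 1 := by
  subst hd
  have : NeZero (m * 2 ^ s) := ⟨by positivity⟩
  obtain ⟨μ, D, -, hD⟩ := hP.exists_reachable_card_gt hmeven (le_refl (n - 1))
  have hDle : #D ≤ m * 2 ^ s := (card_le_univ D).trans_eq (ZMod.card _)
  change #(P.narrowStages (n - 1)) ≤ _
  omega

/-- **Theorem 1.**  If `m` is even and positive and `d = 2^s` with `s ≥ 1`, then in any
deterministic sequential protocol solving the sequential `n`-point modulo-`(m,d)` problem
with certainty, the number of stages `k ∈ {1,…,n-1}` whose message alphabet satisfies
`m * |M_k| < d` (i.e. fewer than `log₂(d/m)` bits are sent) is at most `m·d - 1`. -/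
theorem modulo_game_communication_lower_bound
    {n m d s : ℕ} (hm : 0 < m) (hmeven : Even m) (hs : 1 ≤ s) (hd : d = 2 ^ s)
    (P : SeqProtocol n m d) (hP : P.Solves) :
    ((Finset.Icc 1 (n - 1)).filter
        (fun k => m * (@Fintype.card (P.Msg k) (P.msgFintype k)) < d)).card
      ≤ m * d - 1 :=
  modulo_game_communication_lower_bound_general hm hmeven hd P hP
end

section
/- Let m be an even positive integer, let d = 2^s for some integer s ≥ 1, and let n ≥ m·d. For any sequence of integers Δ_1, …, Δ_n with 1 ≤ Δ_k ≤ m·d − 1 for every k, there exists a subset I ⊆ {1,…,n} such that ∑_{k∈I} Δ_k ≡ 0 (mod d) and ∑_{k∈I} Δ_k ≢ 0 (mod m·d). -/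
/-!
Work in `G = ℤ/mdℤ`, where the required sums are the nonzero elements killed by `m`. The sets
`Σⱼ` of subset sums of `Δ₁, …, Δⱼ` increase with `j`; since `|G| = md ≤ n` they cannot grow at
every step, and `Σⱼ = Σⱼ₊₁` means that `Σⱼ` is closed under adding `Δⱼ₊₁`, so it contains every
multiple of `Δⱼ₊₁`. Finally, the order `e` of a nonzero element of `G` divides `m·2ˢ` and is not
coprime to the even number `m`, so with `c = gcd e m` the multiple `(e / c) • Δⱼ₊₁` is nonzero and
killed by `m`.
-/

open Finset

section SubsetSums

variable {G : Type*} [AddCommMonoid G] [DecidableEq G]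

def subsetSums (a : ℕ → G) (j : ℕ) : Finset G :=
  (Icc 1 j).powerset.image fun I => ∑ k ∈ I, a k

variable {a : ℕ → G} {j : ℕ}

theorem mem_subsetSums {x : G} : x ∈ subsetSums a j ↔ ∃ I ⊆ Icc 1 j, ∑ k ∈ I, a k = x := by
  simp [subsetSums]

theorem subsetSums_mono (a : ℕ → G) : Monotone (subsetSums a) := fun _ _ hij =>
  image_subset_image (powerset_mono.mpr (Icc_subset_Icc_right hij))

theorem zero_mem_subsetSums (a : ℕ → G) (j : ℕ) : 0 ∈ subsetSums a j :=
  mem_subsetSums.mpr ⟨∅, empty_subset _, sum_empty⟩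

theorem add_mem_subsetSums_succ {x : G} (hx : x ∈ subsetSums a j) :
    x + a (j + 1) ∈ subsetSums a (j + 1) := by
  obtain ⟨I, hI, rfl⟩ := mem_subsetSums.mp hx
  have hj : j + 1 ∉ I := fun h => by simpa using (mem_Icc.mp (hI h)).2
  refine mem_subsetSums.mpr
    ⟨insert (j + 1) I, insert_subset (by simp) (hI.trans (Icc_subset_Icc_right j.le_succ)), ?_⟩
  rw [sum_insert hj, add_comm]

theorem nsmul_mem_subsetSums_of_card_succ_le (h : #(subsetSums a (j + 1)) ≤ #(subsetSums a j))
    (k : ℕ) : k • a (j + 1) ∈ subsetSums a j := by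
  have heq := eq_of_subset_of_card_le (subsetSums_mono a j.le_succ) h
  induction k with
  | zero => simpa using zero_mem_subsetSums a j
  | succ k ih => simpa [succ_nsmul, ← heq] using add_mem_subsetSums_succ ih

theorem exists_forall_nsmul_mem_subsetSums [Fintype G] (a : ℕ → G) {n : ℕ}
    (hn : Fintype.card G ≤ n) : ∃ j < n, ∀ k : ℕ, k • a (j + 1) ∈ subsetSums a j := by
  by_contra! hgrow
  have hcard : ∀ j ≤ n, j + 1 ≤ #(subsetSums a j) := by
    intro j hj
    induction j with
    | zero => exact card_pos.mpr ⟨0, zero_mem_subsetSums a 0⟩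
    | succ j ih =>
      have hlt : #(subsetSums a j) < #(subsetSums a (j + 1)) := by
        by_contra! hle
        obtain ⟨k, hk⟩ := hgrow j (by omega)
        exact hk (nsmul_mem_subsetSums_of_card_succ_le hle k)
      have := ih (by omega)
      omega
  have := (hcard n le_rfl).trans (card_le_univ _)
  omega

end SubsetSums

theorem exists_nsmul_ne_zero_and_nsmul_eq_zero {G : Type*} [AddMonoid G] {m s : ℕ} (hm : 0 < m)
    (hmeven : Even m) {x : G} (hx : x ≠ 0) (hxm : (m * 2 ^ s) • x = 0) :
    ∃ k : ℕ, k • x ≠ 0 ∧ m • k • x = 0 := by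
  set e := addOrderOf x
  have he : e ∣ m * 2 ^ s := addOrderOf_dvd_of_nsmul_eq_zero hxm
  have he0 : 0 < e := Nat.pos_of_dvd_of_pos he (by positivity)
  set c := Nat.gcd e m
  have hc : 1 < c := by
    refine lt_of_le_of_ne (Nat.gcd_pos_of_pos_left m he0) fun hcop1 => hx ?_
    have hcop : e.Coprime (m * 2 ^ s) :=
      Nat.Coprime.mul_right hcop1.symm
        ((Nat.Coprime.coprime_dvd_right (even_iff_two_dvd.mp hmeven) hcop1.symm).pow_right s)
    exact AddMonoid.addOrderOf_eq_one_iff.mp (hcop.eq_one_of_dvd he)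
  refine ⟨e / c, nsmul_ne_zero_of_lt_addOrderOf ?_ (Nat.div_lt_self he0 hc), ?_⟩
  · exact (Nat.div_pos (Nat.gcd_le_left m he0) (by omega)).ne'
  · obtain ⟨m', hm'⟩ := Nat.gcd_dvd_right e m
    have hmul : m * (e / c) = m' * e := by
      rw [hm', mul_comm c m', mul_assoc, Nat.mul_div_cancel' (Nat.gcd_dvd_left e m)]
    rw [← mul_nsmul', hmul, mul_nsmul', addOrderOf_nsmul_eq_zero, nsmul_zero]

theorem subset_sum_modulo_lemma_general
    {m d s n : ℕ} (hm : 0 < m) (hmeven : Even m) (hd : d = 2 ^ s)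
    (hn : m * d ≤ n) (Δ : ℕ → ℤ)
    (hΔ : ∀ k ∈ Finset.Icc 1 n, 1 ≤ Δ k ∧ Δ k ≤ (m : ℤ) * d - 1) :
    ∃ I ⊆ Finset.Icc 1 n,
      (d : ℤ) ∣ (∑ k ∈ I, Δ k) ∧ ¬ ((m : ℤ) * d ∣ (∑ k ∈ I, Δ k)) := by
  subst hd
  have : NeZero (m * 2 ^ s) := ⟨by positivity⟩
  obtain ⟨j, hjn, hmultiples⟩ :=
    exists_forall_nsmul_mem_subsetSums (fun k => (Δ k : ZMod (m * 2 ^ s))) (by simpa using hn)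
  have hΔj := hΔ (j + 1) (mem_Icc.mpr ⟨by omega, hjn⟩)
  have hx : (Δ (j + 1) : ZMod (m * 2 ^ s)) ≠ 0 := fun h0 => by
    push_cast at hΔj
    have := Int.eq_zero_of_dvd_of_nonneg_of_lt (by omega) (by push_cast; omega)
      ((ZMod.intCast_zmod_eq_zero_iff_dvd _ _).mp h0)
    omega
  obtain ⟨k, hk0, hkm⟩ := exists_nsmul_ne_zero_and_nsmul_eq_zero (s := s) hm hmeven hx
    (by rw [nsmul_eq_mul, ZMod.natCast_self, zero_mul])
  obtain ⟨I, hI, hsum⟩ := mem_subsetSums.mp (hmultiples k)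
  rw [← hsum, ← Int.cast_sum] at hk0 hkm
  refine ⟨I, hI.trans (Icc_subset_Icc_right hjn.le), ?_, ?_⟩
  · rw [nsmul_eq_mul, ← Int.cast_natCast, ← Int.cast_mul, ZMod.intCast_zmod_eq_zero_iff_dvd]
      at hkm
    push_cast at hkm
    exact (mul_dvd_mul_iff_left (by positivity)).mp hkm
  · rwa [ne_eq, ZMod.intCast_zmod_eq_zero_iff_dvd, Nat.cast_mul, Nat.cast_pow] at hk0

/-- **Lemma 1 (generalized).**  Let `m` be an even positive integer, `d = 2^s` with
`s ≥ 1`, and `n ≥ m·d`.  For any integers `Δ_1, …, Δ_n` with `1 ≤ Δ_k ≤ m·d - 1`,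
there is a subset `I ⊆ {1,…,n}` whose sum is divisible by `d` but not by `m·d`. -/
theorem subset_sum_modulo_lemma
    {m d s n : ℕ} (hm : 0 < m) (hmeven : Even m) (hs : 1 ≤ s) (hd : d = 2 ^ s)
    (hn : m * d ≤ n) (Δ : ℕ → ℤ)
    (hΔ : ∀ k ∈ Finset.Icc 1 n, 1 ≤ Δ k ∧ Δ k ≤ (m : ℤ) * d - 1) :
    ∃ I ⊆ Finset.Icc 1 n,
      (d : ℤ) ∣ (∑ k ∈ I, Δ k) ∧ ¬ ((m : ℤ) * d ∣ (∑ k ∈ I, Δ k)) :=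
  subset_sum_modulo_lemma_general hm hmeven hd hn Δ hΔ
end

section
/- Let ρ be any 2×2 complex matrix that is Hermitian, positive semidefinite, and has trace 1 (a qubit density matrix). Let a = (a₁,a₂,a₃) and b = (b₁,b₂,b₃) be unit vectors in ℝ³, and for a unit vector v let v·σ = v₁σ₁ + v₂σ₂ + v₃σ₃ and P^v_ε = (I + ε·(v·σ))/2 for ε ∈ {+1,−1}. Then the two-time temporal correlation function of sequential projective measurements along a and then b satisfies ∑_{α∈{±1}} ∑_{β∈{±1}} α·β · Tr( P^b_β · P^a_α · ρ · P^a_α ) = a₁b₁ + a₂b₂ + a₃b₃, i.e., it equals the Euclidean dot product a·b, independently of the initial state ρ. -/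
open Matrix
open scoped ComplexOrder

/-- The Pauli matrix σ₁. -/
noncomputable def pauli1 : Matrix (Fin 2) (Fin 2) ℂ := !![0, 1; 1, 0]

/-- The Pauli matrix σ₂. -/
noncomputable def pauli2 : Matrix (Fin 2) (Fin 2) ℂ := !![0, -Complex.I; Complex.I, 0]

/-- The Pauli matrix σ₃. -/
noncomputable def pauli3 : Matrix (Fin 2) (Fin 2) ℂ := !![1, 0; 0, -1]

/-- `v·σ = v₁σ₁ + v₂σ₂ + v₃σ₃` for a real vector `v ∈ ℝ³`. -/
noncomputable def dotPauli (v : Fin 3 → ℝ) : Matrix (Fin 2) (Fin 2) ℂ :=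
  (v 0 : ℂ) • pauli1 + (v 1 : ℂ) • pauli2 + (v 2 : ℂ) • pauli3

/-- The projector `P^v_ε = (I + ε·(v·σ))/2` onto the `ε`-eigenspace of `v·σ`. -/
noncomputable def projMeas (v : Fin 3 → ℝ) (ε : ℤ) : Matrix (Fin 2) (Fin 2) ℂ :=
  (2⁻¹ : ℂ) • ((1 : Matrix (Fin 2) (Fin 2) ℂ) + (ε : ℂ) • dotPauli v)

/-! Summing over the second outcome collapses `∑_β β P^b_β` to `b·σ`, and summing the Lüders
conjugation `P^a_α (·) P^a_α` with signs `α` gives the symmetrised product `½{a·σ, ·}`.  The Pauli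
anticommutator `{a·σ, b·σ} = 2 (a·b) I` then turns the whole correlation into `(a·b) Tr ρ`. -/

theorem sum_sign_smul_projMeas (v : Fin 3 → ℝ) :
    ∑ ε ∈ ({-1, 1} : Finset ℤ), (ε : ℂ) • projMeas v ε = dotPauli v := by
  rw [Finset.sum_pair (by decide)]
  simp only [projMeas]
  push_cast
  module

theorem sum_sign_smul_projMeas_mul_mul (v : Fin 3 → ℝ) (X : Matrix (Fin 2) (Fin 2) ℂ) :
    ∑ ε ∈ ({-1, 1} : Finset ℤ), (ε : ℂ) • (projMeas v ε * X * projMeas v ε)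
      = (2⁻¹ : ℂ) • (dotPauli v * X + X * dotPauli v) := by
  rw [Finset.sum_pair (by decide)]
  simp only [projMeas, smul_mul_assoc, mul_smul_comm, add_mul, mul_add, one_mul, mul_one]
  push_cast
  module

theorem dotPauli_mul_add_mul_swap (a b : Fin 3 → ℝ) :
    dotPauli a * dotPauli b + dotPauli b * dotPauli a
      = (2 * (a 0 * b 0 + a 1 * b 1 + a 2 * b 2 : ℝ) : ℂ) • 1 := by
  ext i j
  fin_cases i <;> fin_cases j <;>
    simp [dotPauli, pauli1, pauli2, pauli3] <;> ring_nf <;> simp [Complex.I_sq]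

theorem trace_mul_mul_mul_cycle_last {n R : Type*} [Fintype n] [CommSemiring R]
    (A B C : Matrix n n R) : (B * A * C * A).trace = (A * B * A * C).trace := by
  rw [Matrix.trace_mul_comm, ← Matrix.mul_assoc, ← Matrix.mul_assoc]

theorem temporal_correlation_two_point_general
    (ρ : Matrix (Fin 2) (Fin 2) ℂ)
    (htr : ρ.trace = 1)
    (a b : Fin 3 → ℝ) :
    ∑ α ∈ ({-1, 1} : Finset ℤ), ∑ β ∈ ({-1, 1} : Finset ℤ),
        (α : ℂ) * (β : ℂ) * (projMeas b β * projMeas a α * ρ * projMeas a α).trace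
      = ((a 0 * b 0 + a 1 * b 1 + a 2 * b 2 : ℝ) : ℂ) := by
  calc _ = ((∑ α ∈ ({-1, 1} : Finset ℤ), (α : ℂ) • (projMeas a α *
              (∑ β ∈ ({-1, 1} : Finset ℤ), (β : ℂ) • projMeas b β) * projMeas a α)) * ρ).trace := by
        simp only [trace_mul_mul_mul_cycle_last]
        simp only [Finset.mul_sum, Finset.sum_mul, Matrix.mul_smul, Matrix.smul_mul,
          Matrix.trace_sum, Matrix.trace_smul, smul_eq_mul, mul_assoc]
    _ = (((a 0 * b 0 + a 1 * b 1 + a 2 * b 2 : ℝ) : ℂ) • ρ).trace := by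
        rw [sum_sign_smul_projMeas, sum_sign_smul_projMeas_mul_mul, dotPauli_mul_add_mul_swap,
          smul_smul, Matrix.smul_mul, Matrix.one_mul]
        congr 2
        push_cast
        ring
    _ = _ := by rw [Matrix.trace_smul, htr, smul_eq_mul, mul_one]

/-- **Two-time temporal correlations of a qubit.**  For any qubit density matrix `ρ`
(Hermitian, positive semidefinite, trace 1) and unit vectors `a, b ∈ ℝ³`, the temporal
correlation function of sequential projective (Lüders) measurements along `a` and then `b`,
`∑_{α,β=±1} α β Tr(P^b_β P^a_α ρ P^a_α)`, equals the Euclidean dot product `a·b`,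
independently of `ρ`. -/
theorem temporal_correlation_two_point
    (ρ : Matrix (Fin 2) (Fin 2) ℂ) (hherm : ρ.IsHermitian) (hpos : ρ.PosSemidef)
    (htr : ρ.trace = 1)
    (a b : Fin 3 → ℝ) (ha : a 0 ^ 2 + a 1 ^ 2 + a 2 ^ 2 = 1)
    (hb : b 0 ^ 2 + b 1 ^ 2 + b 2 ^ 2 = 1) :
    ∑ α ∈ ({-1, 1} : Finset ℤ), ∑ β ∈ ({-1, 1} : Finset ℤ),
        (α : ℂ) * (β : ℂ) * (projMeas b β * projMeas a α * ρ * projMeas a α).trace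
      = ((a 0 * b 0 + a 1 * b 1 + a 2 * b 2 : ℝ) : ℂ) :=
  temporal_correlation_two_point_general ρ htr a b
end

section
/- Let ρ be any 2×2 complex matrix that is Hermitian, positive semidefinite, and has trace 1. Let a⁽¹⁾, a⁽²⁾, a⁽³⁾, a⁽⁴⁾ be unit vectors in ℝ³ and write P^k_ε = (I + ε·(a⁽ᵏ⁾·σ))/2 for ε ∈ {+1,−1}. Then the four-time temporal correlation function of the sequential projective measurements along a⁽¹⁾, a⁽²⁾, a⁽³⁾, a⁽⁴⁾ factors into dot products of consecutive pairs: ∑_{α₁,α₂,α₃,α₄ ∈ {±1}} α₁α₂α₃α₄ · Tr( P⁴_{α₄} P³_{α₃} P²_{α₂} P¹_{α₁} ρ P¹_{α₁} P²_{α₂} P³_{α₃} P⁴_{α₄} ) = (a⁽¹⁾·a⁽²⁾)(a⁽³⁾·a⁽⁴⁾), independently of the initial state ρ. -/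
open Matrix
open scoped ComplexOrder

/-!
In the Heisenberg picture the correlation is `Tr(Ψ₁(Ψ₂(Ψ₃(Ψ₄(I)))) ρ)`, where
`Ψ_v(B) = ∑_α α P^v_α B P^v_α`. Since `P^v_± = (I ± v·σ)/2`, the signed Lüders sum `Ψ_v(B)` is
the anticommutator `((v·σ) B + B (v·σ))/2`, so `Ψ_v(I) = v·σ` and, by the Pauli anticommutation
relations, `Ψ_v(w·σ) = (v·w) I`. The nested maps thus collapse pairwise to
`(a⁽¹⁾·a⁽²⁾)(a⁽³⁾·a⁽⁴⁾) I`.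
-/

lemma half_conj_sub_half_conj {R : Type*} [Ring R] [Algebra ℂ R] (A B : R) :
    (2⁻¹ : ℂ) • (1 + A) * B * ((2⁻¹ : ℂ) • (1 + A))
      - (2⁻¹ : ℂ) • (1 - A) * B * ((2⁻¹ : ℂ) • (1 - A)) = (2⁻¹ : ℂ) • (A * B + B * A) := by
  simp only [smul_mul_assoc, mul_smul_comm, add_mul, mul_add, sub_mul, mul_sub,
    one_mul, mul_one]
  module

lemma dotPauli_mul_add_mul (v w : Fin 3 → ℝ) :
    dotPauli v * dotPauli w + dotPauli w * dotPauli v = (2 * ((v ⬝ᵥ w : ℝ) : ℂ)) • 1 := by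
  ext i j
  fin_cases i <;> fin_cases j <;>
    simp [dotPauli, pauli1, pauli2, pauli3, dotProduct, Fin.sum_univ_three] <;>
    ring_nf <;> simp [Complex.I_sq]

noncomputable def signedLuders (v : Fin 3 → ℝ) (B : Matrix (Fin 2) (Fin 2) ℂ) :
    Matrix (Fin 2) (Fin 2) ℂ :=
  ∑ α ∈ ({-1, 1} : Finset ℤ), (α : ℂ) • (projMeas v α * B * projMeas v α)

lemma signedLuders_eq (v : Fin 3 → ℝ) (B : Matrix (Fin 2) (Fin 2) ℂ) :
    signedLuders v B = (2⁻¹ : ℂ) • (dotPauli v * B + B * dotPauli v) := by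
  rw [signedLuders, Finset.sum_pair (by norm_num), ← half_conj_sub_half_conj]
  simp only [projMeas, Int.cast_neg, Int.cast_one, neg_smul, one_smul, sub_eq_add_neg]
  abel

lemma signedLuders_smul (v : Fin 3 → ℝ) (c : ℂ) (B : Matrix (Fin 2) (Fin 2) ℂ) :
    signedLuders v (c • B) = c • signedLuders v B := by
  simp only [signedLuders_eq, mul_smul_comm, smul_mul_assoc, ← smul_add, smul_comm c]

lemma signedLuders_one (v : Fin 3 → ℝ) : signedLuders v 1 = dotPauli v := by
  rw [signedLuders_eq, mul_one, one_mul, ← two_smul ℂ, smul_smul]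
  norm_num

lemma signedLuders_dotPauli (v w : Fin 3 → ℝ) :
    signedLuders v (dotPauli w) = ((v ⬝ᵥ w : ℝ) : ℂ) • 1 := by
  rw [signedLuders_eq, dotPauli_mul_add_mul, smul_smul, inv_mul_cancel_left₀ two_ne_zero]

lemma sum_trace_eq_trace_mul_signedLuders (ρ : Matrix (Fin 2) (Fin 2) ℂ)
    (a1 a2 a3 a4 : Fin 3 → ℝ) :
    ∑ α1 ∈ ({-1, 1} : Finset ℤ), ∑ α2 ∈ ({-1, 1} : Finset ℤ),
      ∑ α3 ∈ ({-1, 1} : Finset ℤ), ∑ α4 ∈ ({-1, 1} : Finset ℤ),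
        (α1 : ℂ) * (α2 : ℂ) * (α3 : ℂ) * (α4 : ℂ) *
          (projMeas a4 α4 * projMeas a3 α3 * projMeas a2 α2 * projMeas a1 α1 * ρ *
            projMeas a1 α1 * projMeas a2 α2 * projMeas a3 α3 * projMeas a4 α4).trace
      = (signedLuders a1 (signedLuders a2 (signedLuders a3 (signedLuders a4 1))) * ρ).trace := by
  simp only [signedLuders, Finset.mul_sum, Finset.sum_mul, Matrix.smul_mul, Matrix.mul_smul,
    trace_sum, trace_smul, smul_eq_mul, mul_one]
  refine Finset.sum_congr rfl fun α1 _ => Finset.sum_congr rfl fun α2 _ =>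
    Finset.sum_congr rfl fun α3 _ => Finset.sum_congr rfl fun α4 _ => ?_
  iterate 4 (rw [trace_mul_comm]; simp only [← mul_assoc])

theorem temporal_correlation_four_point_general
    (ρ : Matrix (Fin 2) (Fin 2) ℂ) (htr : ρ.trace = 1)
    (a1 a2 a3 a4 : Fin 3 → ℝ) :
    ∑ α1 ∈ ({-1, 1} : Finset ℤ), ∑ α2 ∈ ({-1, 1} : Finset ℤ),
      ∑ α3 ∈ ({-1, 1} : Finset ℤ), ∑ α4 ∈ ({-1, 1} : Finset ℤ),
        (α1 : ℂ) * (α2 : ℂ) * (α3 : ℂ) * (α4 : ℂ) *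
          (projMeas a4 α4 * projMeas a3 α3 * projMeas a2 α2 * projMeas a1 α1 * ρ *
            projMeas a1 α1 * projMeas a2 α2 * projMeas a3 α3 * projMeas a4 α4).trace
      = (((a1 0 * a2 0 + a1 1 * a2 1 + a1 2 * a2 2) *
          (a3 0 * a4 0 + a3 1 * a4 1 + a3 2 * a4 2) : ℝ) : ℂ) := by
  rw [sum_trace_eq_trace_mul_signedLuders, signedLuders_one, signedLuders_dotPauli,
    signedLuders_smul, signedLuders_one, signedLuders_smul, signedLuders_dotPauli,
    smul_mul_assoc, smul_mul_assoc, one_mul, trace_smul, trace_smul, htr]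
  simp only [dotProduct, Fin.sum_univ_three, smul_eq_mul, mul_one]
  push_cast
  ring

/-- **Four-time temporal correlations of a qubit factorize.**  For any qubit density
matrix `ρ` and unit vectors `a⁽¹⁾, a⁽²⁾, a⁽³⁾, a⁽⁴⁾ ∈ ℝ³`, the temporal correlation
function of four sequential projective (Lüders) measurements,
`∑_{α₁α₂α₃α₄=±1} α₁α₂α₃α₄ Tr(P⁴_{α₄}P³_{α₃}P²_{α₂}P¹_{α₁} ρ P¹_{α₁}P²_{α₂}P³_{α₃}P⁴_{α₄})`,
equals `(a⁽¹⁾·a⁽²⁾)(a⁽³⁾·a⁽⁴⁾)`, independently of `ρ`. -/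
theorem temporal_correlation_four_point
    (ρ : Matrix (Fin 2) (Fin 2) ℂ) (hherm : ρ.IsHermitian) (hpos : ρ.PosSemidef)
    (htr : ρ.trace = 1)
    (a1 a2 a3 a4 : Fin 3 → ℝ)
    (ha1 : a1 0 ^ 2 + a1 1 ^ 2 + a1 2 ^ 2 = 1)
    (ha2 : a2 0 ^ 2 + a2 1 ^ 2 + a2 2 ^ 2 = 1)
    (ha3 : a3 0 ^ 2 + a3 1 ^ 2 + a3 2 ^ 2 = 1)
    (ha4 : a4 0 ^ 2 + a4 1 ^ 2 + a4 2 ^ 2 = 1) :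
    ∑ α1 ∈ ({-1, 1} : Finset ℤ), ∑ α2 ∈ ({-1, 1} : Finset ℤ),
      ∑ α3 ∈ ({-1, 1} : Finset ℤ), ∑ α4 ∈ ({-1, 1} : Finset ℤ),
        (α1 : ℂ) * (α2 : ℂ) * (α3 : ℂ) * (α4 : ℂ) *
          (projMeas a4 α4 * projMeas a3 α3 * projMeas a2 α2 * projMeas a1 α1 * ρ *
            projMeas a1 α1 * projMeas a2 α2 * projMeas a3 α3 * projMeas a4 α4).trace
      = (((a1 0 * a2 0 + a1 1 * a2 1 + a1 2 * a2 2) *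
          (a3 0 * a4 0 + a3 1 * a4 1 + a3 2 * a4 2) : ℝ) : ℂ) :=
  temporal_correlation_four_point_general ρ htr a1 a2 a3 a4
end

section
/- Let m be an even positive integer, let d = 2^s for some integer s ≥ 1, and let Δ be an integer with 1 ≤ Δ ≤ m·d − 1. Then there exists a positive integer t such that t·Δ ≡ 0 (mod d) and t·Δ ≢ 0 (mod m·d). -/
/-!
If `d ∣ Δ`, take `t = 1`. Otherwise `Δ = 2^a u` with `u` odd and `a < s`, and the multiple
`m 2^(s-1-a) Δ = (m d / 2) u` is divisible by `d` (as `m` is even) but not by `m d` (as `u` is odd).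
-/

theorem Int.not_dvd_of_pos_of_lt {a b : ℤ} (ha : 0 < a) (hab : a < b) : ¬ b ∣ a :=
  fun h => ha.ne' (Int.eq_zero_of_dvd_of_nonneg_of_lt ha.le hab h)

theorem Int.exists_pos_mul_eq_two_pow_mul_odd {Δ : ℤ} {s : ℕ} (hΔ : Δ ≠ 0)
    (hs : ¬ 2 ^ (s + 1) ∣ Δ) : ∃ t : ℕ, 0 < t ∧ ∃ u : ℤ, Odd u ∧ t * Δ = 2 ^ s * u := by
  obtain ⟨u, hΔu, hu⟩ :=
    (Int.finiteMultiplicity_iff (a := 2).mpr ⟨by decide, hΔ⟩).exists_eq_pow_mul_and_not_dvd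
  set a := multiplicity (2 : ℤ) Δ
  have has : a ≤ s := by
    by_contra! h
    exact hs (hΔu ▸ (pow_dvd_pow 2 h).mul_right u)
  refine ⟨2 ^ (s - a), by positivity, u, Int.odd_iff.mpr (Int.two_dvd_ne_zero.mp hu), ?_⟩
  rw [hΔu, ← mul_assoc]
  push_cast
  rw [← pow_add, Nat.sub_add_cancel has]

theorem multiple_div_d_not_md_general
    {m d s : ℕ} (hm : 0 < m) (hmeven : Even m) (hd : d = 2 ^ s)
    (Δ : ℤ) (h1 : 1 ≤ Δ) (h2 : Δ ≤ (m : ℤ) * d - 1) :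
    ∃ t : ℕ, 0 < t ∧ (d : ℤ) ∣ (t : ℤ) * Δ ∧ ¬ ((m : ℤ) * d ∣ (t : ℤ) * Δ) := by
  by_cases hdΔ : (d : ℤ) ∣ Δ
  · exact ⟨1, one_pos, by simpa using hdΔ,
      by simpa using Int.not_dvd_of_pos_of_lt (by omega) (by omega : Δ < m * d)⟩
  obtain ⟨s, rfl⟩ : ∃ r, s = r + 1 := Nat.exists_eq_succ_of_ne_zero (by rintro rfl; simp_all)
  subst hd
  obtain ⟨t, ht, u, hu, htΔ⟩ :=
    Int.exists_pos_mul_eq_two_pow_mul_odd (Δ := Δ) (s := s) (by omega) (by exact_mod_cast hdΔ)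
  have hmtΔ : ((m * t : ℕ) : ℤ) * Δ = m * 2 ^ s * u := by
    push_cast
    rw [mul_assoc, htΔ, mul_assoc]
  refine ⟨m * t, by positivity, ?_, ?_⟩ <;> rw [hmtΔ, Nat.cast_pow, Nat.cast_ofNat, pow_succ]
  · rw [mul_comm (m : ℤ), mul_assoc]
    exact mul_dvd_mul_left _ ((Int.natCast_dvd_natCast.mpr hmeven.two_dvd).mul_right u)
  · rw [← mul_assoc, mul_dvd_mul_iff_left (by positivity)]
    exact Int.two_dvd_ne_zero.mpr (Int.odd_iff.mp hu)

/-- Key step of the subset-sum lemma: if `m` is an even positive integer, `d = 2^s`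
with `s ≥ 1`, and `Δ` is an integer with `1 ≤ Δ ≤ m·d - 1`, then some positive
multiple of `Δ` is divisible by `d` but not by `m·d`. -/
theorem multiple_div_d_not_md
    {m d s : ℕ} (hm : 0 < m) (hmeven : Even m) (hs : 1 ≤ s) (hd : d = 2 ^ s)
    (Δ : ℤ) (h1 : 1 ≤ Δ) (h2 : Δ ≤ (m : ℤ) * d - 1) :
    ∃ t : ℕ, 0 < t ∧ (d : ℤ) ∣ (t : ℤ) * Δ ∧ ¬ ((m : ℤ) * d ∣ (t : ℤ) * Δ) :=
  multiple_div_d_not_md_general hm hmeven hd Δ h1 h2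
end
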